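/- arXiv:2009.03049 — 2 statements merged into one kernel-verified Lean document; each statement's English description precedes it below -/
import Mathlib

section
/- Define f(x,y) = −5x³ + (1/8)|y|^{5/4} + 2x and g(x,y) = (1/2)|x|^{3/2} + y for x, y ∈ ℝ. Then for all x, y, x̄, ȳ ∈ ℝ: (x − x̄)(f(x,y) − f(x̄,ȳ)) + |g(x,y) − g(x̄,ȳ)|² ≤ 8(|x − x̄|² + |y − ȳ|²) − (1/4)|x − x̄|²(x² + x̄²) + (1/4)|y − ȳ|²(y² + ȳ²). -/
lemma rpow_one_add_sub (a b q : ℝ) (hb : 0 ≤ b) (hab : b ≤ a) (hq0 : 0 < q) (hq1 : q ≤ 1) :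
    a ^ ((1:ℝ)+q) - b ^ ((1:ℝ)+q) ≤ 2 * a ^ q * (a - b) := by
  have ha : 0 ≤ a := hb.trans hab
  have hne : (1:ℝ) + q ≠ 0 := by positivity
  have h1 : a ^ ((1:ℝ)+q) = a * a ^ q := by
    rw [Real.rpow_add' ha hne, Real.rpow_one]
  have h2 : b ^ ((1:ℝ)+q) = b * b ^ q := by
    rw [Real.rpow_add' hb hne, Real.rpow_one]
  have h3 : b ^ q ≤ a ^ q := Real.rpow_le_rpow hb hab hq0.le
  have e1 : ((1:ℝ)-q)+q = 1 := by ring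
  have hb1 : b = b^((1:ℝ)-q)*b^q := by
    rw [← Real.rpow_add' hb (by rw [e1]; norm_num), e1, Real.rpow_one]
  have ha1 : a = a^((1:ℝ)-q)*a^q := by
    rw [← Real.rpow_add' ha (by rw [e1]; norm_num), e1, Real.rpow_one]
  have h5 : b^((1:ℝ)-q) ≤ a^((1:ℝ)-q) := Real.rpow_le_rpow hb hab (by linarith)
  have h4 : b * a ^ q ≤ a * b ^ q := by
    calc b * a^q = b^((1:ℝ)-q)*b^q*a^q := by rw [← hb1]
      _ ≤ a^((1:ℝ)-q)*b^q*a^q := by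
          apply mul_le_mul_of_nonneg_right
            (mul_le_mul_of_nonneg_right h5 (Real.rpow_nonneg hb q)) (Real.rpow_nonneg ha q)
      _ = a * b^q := by rw [mul_right_comm, ← ha1]
  have h6 : (a-b)*b^q ≤ (a-b)*a^q :=
    mul_le_mul_of_nonneg_left h3 (by linarith)
  rw [h1, h2]
  nlinarith [h4, h6]

lemma rpow_le_one_add (t q : ℝ) (ht : 0 ≤ t) (hq0 : 0 < q) (hq1 : q ≤ 1) : t ^ q ≤ 1 + t := by
  rcases le_total t 1 with h | h
  · have := Real.rpow_le_one ht h hq0.le; linarith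
  · have := Real.rpow_le_rpow_of_exponent_le h hq1
    rw [Real.rpow_one] at this; linarith

lemma diffBound (s t q : ℝ) (hq0 : 0 < q) (hq1 : q ≤ 1) :
    |s|^((1:ℝ)+q) - |t|^((1:ℝ)+q) ≤ 2*(1+|s|+|t|)*|s-t| := by
  rcases le_total |t| |s| with h | h
  · have h1 := rpow_one_add_sub |s| |t| q (abs_nonneg t) h hq0 hq1
    have h2 : |s|^q ≤ 1+|s| := rpow_le_one_add |s| q (abs_nonneg s) hq0 hq1
    have h3 : |s|-|t| ≤ |s-t| := abs_sub_abs_le_abs_sub s t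
    have h4 : 0 ≤ |s|^q := Real.rpow_nonneg (abs_nonneg s) q
    nlinarith [abs_nonneg t, abs_nonneg (s-t), abs_nonneg s]
  · have h1 : |s|^((1:ℝ)+q) ≤ |t|^((1:ℝ)+q) :=
      Real.rpow_le_rpow (abs_nonneg s) h (by linarith)
    have h2 : 0 ≤ 2*(1+|s|+|t|)*|s-t| := by positivity
    linarith

lemma Esq (s t : ℝ) (h : |t| ≤ |s|) :
    (|s|^((3:ℝ)/2) - |t|^((3:ℝ)/2))^2 ≤ 4*(|s|+|t|)*(s-t)^2 := by
  have e : (3:ℝ)/2 = 1 + 1/2 := by norm_num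
  rw [e]
  have h0 : 0 ≤ |s|^((1:ℝ)+1/2) - |t|^((1:ℝ)+1/2) := by
    have := Real.rpow_le_rpow (abs_nonneg t) h (by norm_num : (0:ℝ) ≤ 1+1/2)
    linarith
  have h1 := rpow_one_add_sub |s| |t| (1/2) (abs_nonneg t) h (by norm_num) (by norm_num)
  have h3 : |s|-|t| ≤ |s-t| := abs_sub_abs_le_abs_sub s t
  have h4 : 0 ≤ |s|^((1:ℝ)/2) := Real.rpow_nonneg (abs_nonneg s) _
  have h2 : |s|^((1:ℝ)+1/2) - |t|^((1:ℝ)+1/2) ≤ 2*|s|^((1:ℝ)/2)*|s-t| := by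
    nlinarith
  have hsq : (|s|^((1:ℝ)/2))^2 = |s| := by
    rw [← Real.rpow_natCast (|s|^((1:ℝ)/2)) 2, ← Real.rpow_mul (abs_nonneg s)]
    norm_num
  have h5 : (|s|^((1:ℝ)+1/2) - |t|^((1:ℝ)+1/2))^2 ≤ (2*|s|^((1:ℝ)/2)*|s-t|)^2 :=
    pow_le_pow_left₀ h0 h2 2
  have h6 : (2*|s|^((1:ℝ)/2)*|s-t|)^2 = 4 * |s| * (s-t)^2 := by
    rw [mul_pow, mul_pow, hsq, sq_abs]; ring
  nlinarith [abs_nonneg t, sq_nonneg (s-t)]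

lemma Esq' (s t : ℝ) :
    (|s|^((3:ℝ)/2) - |t|^((3:ℝ)/2))^2 ≤ 4*(|s|+|t|)*(s-t)^2 := by
  rcases le_total |t| |s| with h | h
  · exact Esq s t h
  · calc (|s|^((3:ℝ)/2) - |t|^((3:ℝ)/2))^2
        = (|t|^((3:ℝ)/2) - |s|^((3:ℝ)/2))^2 := by ring
      _ ≤ 4*(|t|+|s|)*(t-s)^2 := Esq t s h
      _ = 4*(|s|+|t|)*(s-t)^2 := by ring

lemma young (u v Y Y' : ℝ) :
    2 * (1 + Y + Y') * v * u ≤ 3 * u^2 + v^2 + (v * Y)^2 + (v * Y')^2 := by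
  nlinarith [sq_nonneg (u - v), sq_nonneg (u - v * Y), sq_nonneg (u - v * Y')]

set_option maxHeartbeats 1000000 in
lemma mainAux (x y x' y' A A' C C' : ℝ)
    (hD1 : A - A' ≤ 2 * (1 + |y| + |y'|) * |y - y'|)
    (hD2 : A' - A ≤ 2 * (1 + |y| + |y'|) * |y - y'|)
    (hEsq : (C - C')^2 ≤ 4 * (|x| + |x'|) * (x - x')^2) :
    (x - x') * (-5 * x ^ 3 + 1 / 8 * A + 2 * x - (-5 * x' ^ 3 + 1 / 8 * A' + 2 * x')) +
      (1 / 2 * C + y - (1 / 2 * C' + y')) ^ 2 ≤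
    8 * ((x - x') ^ 2 + (y - y') ^ 2) - 1 / 4 * (x - x') ^ 2 * (x ^ 2 + x' ^ 2) +
      1 / 4 * (y - y') ^ 2 * (y ^ 2 + y' ^ 2) := by
  have hu : (0:ℝ) ≤ |x - x'| := abs_nonneg _
  -- |A - A'| ≤ B
  have hDabs : |A - A'| ≤ 2 * (1 + |y| + |y'|) * |y - y'| := abs_le.mpr ⟨by linarith, hD1⟩
  have hxD : (x - x') * (A - A') ≤ 2 * (1 + |y| + |y'|) * |y - y'| * |x - x'| := by
    calc (x - x') * (A - A') ≤ |(x - x') * (A - A')| := le_abs_self _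
      _ = |x - x'| * |A - A'| := abs_mul _ _
      _ ≤ |x - x'| * (2 * (1 + |y| + |y'|) * |y - y'|) := mul_le_mul_of_nonneg_left hDabs hu
      _ = 2 * (1 + |y| + |y'|) * |y - y'| * |x - x'| := by ring
  have hyoung := young (|x - x'|) (|y - y'|) (|y|) (|y'|)
  have e1 : (|y - y'| * |y|)^2 = (y - y')^2 * y^2 := by rw [mul_pow, sq_abs, sq_abs]
  have e2 : (|y - y'| * |y'|)^2 = (y - y')^2 * y'^2 := by rw [mul_pow, sq_abs, sq_abs]
  have e3 : |x - x'|^2 = (x - x')^2 := sq_abs _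
  have e4 : |y - y'|^2 = (y - y')^2 := sq_abs _
  rw [e1, e2, e3, e4] at hyoung
  have hDfinal : (x - x') * (A - A') ≤
      3 * (x - x')^2 + (y - y')^2 + (y - y')^2 * y^2 + (y - y')^2 * y'^2 := by linarith
  -- g part
  have hEw : (1 / 2 * C + y - (1 / 2 * C' + y')) ^ 2 ≤
      (1/2) * (C - C')^2 + 2 * (y - y')^2 := by
    nlinarith [sq_nonneg ((1/2) * (C - C') - (y - y'))]
  have habs1 : |x| + |x'| ≤ (2 + x^2 + x'^2)/2 := by
    nlinarith [sq_nonneg (1 - |x|), sq_nonneg (1 - |x'|), sq_abs x, sq_abs x']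
  have hE2 : 4 * (|x| + |x'|) * (x - x')^2 ≤ 4 * ((2 + x^2 + x'^2)/2) * (x - x')^2 :=
    mul_le_mul_of_nonneg_right (by linarith) (sq_nonneg (x - x'))
  have hGfinal : (1 / 2 * C + y - (1 / 2 * C' + y')) ^ 2 ≤
      2 * (x - x')^2 + (x - x')^2 * x^2 + (x - x')^2 * x'^2 + 2 * (y - y')^2 := by
    linarith [hEw, hEsq, hE2]
  have hcubic : (x - x') * ((-5) * x^3 + 5 * x'^3) ≤
      -(5/2) * (x - x')^2 * x^2 - (5/2) * (x - x')^2 * x'^2 := by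
    nlinarith [sq_nonneg ((x - x') * (x + x'))]
  have hsplit : (x - x') * (-5 * x ^ 3 + 1 / 8 * A + 2 * x - (-5 * x' ^ 3 + 1 / 8 * A' + 2 * x'))
      = (x - x') * ((-5) * x^3 + 5 * x'^3) + (1/8) * ((x - x') * (A - A'))
        + 2 * (x - x')^2 := by ring
  rw [hsplit]
  linarith [hcubic, hDfinal, hGfinal, sq_nonneg (x - x'), sq_nonneg (y - y'),
    mul_nonneg (sq_nonneg (x - x')) (sq_nonneg x), mul_nonneg (sq_nonneg (x - x')) (sq_nonneg x'),
    mul_nonneg (sq_nonneg (y - y')) (sq_nonneg y), mul_nonneg (sq_nonneg (y - y')) (sq_nonneg y')]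


noncomputable def fEx (x y : ℝ) : ℝ := -5 * x ^ 3 + (1 / 8) * |y| ^ ((5 : ℝ) / 4) + 2 * x

noncomputable def gEx (x y : ℝ) : ℝ := (1 / 2) * |x| ^ ((3 : ℝ) / 2) + y

/-- Khasminskii-type monotonicity condition for the example SDDE (η̄ = 3). -/
theorem stmt_9 (x y x' y' : ℝ) :
    (x - x') * (fEx x y - fEx x' y') + |gEx x y - gEx x' y'| ^ 2 ≤
      8 * (|x - x'| ^ 2 + |y - y'| ^ 2) - (1 / 4) * |x - x'| ^ 2 * (x ^ 2 + x' ^ 2)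
        + (1 / 4) * |y - y'| ^ 2 * (y ^ 2 + y' ^ 2) := by
  simp only [fEx, gEx, sq_abs]
  rw [show (5:ℝ)/4 = 1 + 1/4 by norm_num]
  refine mainAux x y x' y' _ _ _ _ ?_ ?_ ?_
  · exact diffBound y y' (1/4) (by norm_num) (by norm_num)
  · have := diffBound y' y (1/4) (by norm_num) (by norm_num)
    rw [abs_sub_comm y' y] at this
    linarith
  · exact Esq' x x'
end

section
/- Define f(x,y) = −5x³ + (1/8)|y|^{5/4} + 2x, g(x,y) = (1/2)|x|^{3/2} + y, h(x,y) = x + y, and λ = 0.2. Then for all x, y, x̄, ȳ ∈ ℝ: 2(x−x̄)(f(x,y)−f(x̄,ȳ)) + |g(x,y)−g(x̄,ȳ)|² + 2λ(x−x̄)(h(x,y)−h(x̄,ȳ)) + λ|h(x,y)−h(x̄,ȳ)|² ≤ 12(|x−x̄|² + |y−ȳ|²) − (11/4)|x−x̄|²(x² + x̄²) + (11/4)|y−ȳ|²(y² + ȳ²). -/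
noncomputable def hEx (x y : ℝ) : ℝ := x + y

theorem rpow32' (u : ℝ) (h : 0 ≤ u) : u ^ ((3:ℝ)/2) = (Real.sqrt u)^3 := by
  have h2 : Real.sqrt u ^ 2 = u := Real.sq_sqrt h
  conv_lhs => rw [← h2]
  rw [← Real.rpow_natCast (Real.sqrt u) 2, ← Real.rpow_mul (Real.sqrt_nonneg u),
    ← Real.rpow_natCast (Real.sqrt u) 3]
  norm_num

theorem rpow54' (u : ℝ) (h : 0 ≤ u) : u ^ ((5:ℝ)/4) = (u ^ ((1:ℝ)/4))^5 := by
  rw [← Real.rpow_natCast (u ^ ((1:ℝ)/4)) 5, ← Real.rpow_mul h]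
  norm_num

theorem rpow14' (u : ℝ) (h : 0 ≤ u) : (u ^ ((1:ℝ)/4))^4 = u := by
  rw [← Real.rpow_natCast (u ^ ((1:ℝ)/4)) 4, ← Real.rpow_mul h]
  norm_num

theorem L1inner (s t : ℝ) (hs : 0 ≤ s) (ht : 0 ≤ t) :
    (s^3 - t^3)^2 ≤ (9/4) * (1 + s^4 + t^4) * (s^2 - t^2)^2 := by
  rcases le_total s t with h | h
  · nlinarith [sq_nonneg (s-t), sq_nonneg (s+t), mul_nonneg hs ht, sq_nonneg (s*t),
      sq_nonneg (s*t - 1), sq_nonneg (t^2 - 1), mul_nonneg (mul_nonneg hs ht) (sq_nonneg (s-t)),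
      sq_nonneg ((s-t)*(s+t)), mul_nonneg (sub_nonneg.2 h) hs, sq_nonneg (t*(s-t))]
  · nlinarith [sq_nonneg (s-t), sq_nonneg (s+t), mul_nonneg hs ht, sq_nonneg (s*t),
      sq_nonneg (s*t - 1), sq_nonneg (s^2 - 1), mul_nonneg (mul_nonneg hs ht) (sq_nonneg (s-t)),
      sq_nonneg ((s-t)*(s+t)), mul_nonneg (sub_nonneg.2 h) ht, sq_nonneg (s*(s-t))]

theorem aux5 (p q : ℝ) (hq : 0 ≤ q) (h : q ≤ p) :
    (p^5 - q^5)^2 ≤ (25/16) * p^2 * (p^4 - q^4)^2 := by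
  have hp : 0 ≤ p := hq.trans h
  have key : 4 * (p^5 - q^5) ≤ 5 * p * (p^4 - q^4) := by
    nlinarith [mul_nonneg (sub_nonneg.2 h) (sq_nonneg (q^2 - q*p)),
      mul_nonneg (sub_nonneg.2 h) (sq_nonneg (q^2 + q*p)),
      mul_nonneg (mul_nonneg (sub_nonneg.2 h) hq) (mul_nonneg hq hp),
      mul_nonneg (sub_nonneg.2 h) (sq_nonneg (p^2 - q^2))]
  have h5 : 0 ≤ p^5 - q^5 := by nlinarith [pow_le_pow_left₀ hq h 5]
  have h4 : 0 ≤ p^4 - q^4 := by nlinarith [pow_le_pow_left₀ hq h 4]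
  nlinarith [mul_self_nonneg (p^5 - q^5), key, mul_nonneg h5 h4,
    mul_le_mul key key (by linarith) (by positivity)]

theorem auxp (p q : ℝ) : p^2 ≤ 1 + p^8 + q^8 := by
  nlinarith [sq_nonneg (p^4 - 1), sq_nonneg (p^2 - 1), sq_nonneg (p^4 - p^2),
    pow_two_nonneg (q^4), sq_nonneg p]

theorem L2inner (p q : ℝ) (hp : 0 ≤ p) (hq : 0 ≤ q) :
    (p^5 - q^5)^2 ≤ (25/16) * (1 + p^8 + q^8) * (p^4 - q^4)^2 := by
  rcases le_total q p with h | h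
  · calc (p^5-q^5)^2 ≤ (25/16) * p^2 * (p^4-q^4)^2 := aux5 p q hq h
      _ ≤ (25/16) * (1 + p^8 + q^8) * (p^4-q^4)^2 := by
        have := auxp p q
        nlinarith [sq_nonneg (p^4 - q^4)]
  · have h1 := aux5 q p hp h
    have := auxp q p
    nlinarith [sq_nonneg (p^4 - q^4)]

theorem finalStep (a b D E C X Y : ℝ) (hX : 0 ≤ X) (hY : 0 ≤ Y)
    (hD : D^2 ≤ (9/4)*(1+X)*a^2) (hE : E^2 ≤ (25/16)*(1+Y)*b^2)
    (hC : (1/2)*a^2*X ≤ a*C) :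
    2*a*(-5*C + (1/8)*E + 2*a) + ((1/2)*D + b)^2 + 2*(0.2:ℝ)*a*(a+b) + (0.2:ℝ)*(a+b)^2 ≤
      12*(a^2 + b^2) - (11/4)*a^2*X + (11/4)*b^2*Y := by
  nlinarith [sq_nonneg (a - E), sq_nonneg (D - 2*b), sq_nonneg (a - b),
    mul_nonneg (sq_nonneg a) hX, mul_nonneg (sq_nonneg b) hY, sq_nonneg a, sq_nonneg b]

/-- Jump-adapted monotonicity condition (Assumption 4.6) for the example, `λ = 0.2`. -/
theorem stmt_13 (x y x' y' : ℝ) :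
    2 * (x - x') * (fEx x y - fEx x' y') + |gEx x y - gEx x' y'| ^ 2
        + 2 * (0.2 : ℝ) * (x - x') * (hEx x y - hEx x' y')
        + (0.2 : ℝ) * |hEx x y - hEx x' y'| ^ 2 ≤
      12 * (|x - x'| ^ 2 + |y - y'| ^ 2) - (11 / 4) * |x - x'| ^ 2 * (x ^ 2 + x' ^ 2)
        + (11 / 4) * |y - y'| ^ 2 * (y ^ 2 + y' ^ 2) := by
  set s := Real.sqrt |x| with hsdef
  set t := Real.sqrt |x'| with htdef
  set p := |y| ^ ((1:ℝ)/4) with hpdef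
  set q := |y'| ^ ((1:ℝ)/4) with hqdef
  have hs0 : 0 ≤ s := Real.sqrt_nonneg _
  have ht0 : 0 ≤ t := Real.sqrt_nonneg _
  have hp0 : 0 ≤ p := Real.rpow_nonneg (abs_nonneg y) _
  have hq0 : 0 ≤ q := Real.rpow_nonneg (abs_nonneg y') _
  have hs2 : s^2 = |x| := Real.sq_sqrt (abs_nonneg x)
  have ht2 : t^2 = |x'| := Real.sq_sqrt (abs_nonneg x')
  have hp4 : p^4 = |y| := rpow14' |y| (abs_nonneg y)
  have hq4 : q^4 = |y'| := rpow14' |y'| (abs_nonneg y')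
  have hs4 : s^4 = x^2 := by rw [show s^4 = (s^2)^2 by ring, hs2, sq_abs]
  have ht4 : t^4 = x'^2 := by rw [show t^4 = (t^2)^2 by ring, ht2, sq_abs]
  have hp8 : p^8 = y^2 := by rw [show p^8 = (p^4)^2 by ring, hp4, sq_abs]
  have hq8 : q^8 = y'^2 := by rw [show q^8 = (q^4)^2 by ring, hq4, sq_abs]
  have hax : (s^2 - t^2)^2 ≤ (x - x')^2 := by
    have h1 : |s^2 - t^2| ≤ |x - x'| := by
      rw [hs2, ht2]; exact abs_abs_sub_abs_le_abs_sub x x'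
    calc (s^2 - t^2)^2 = |s^2 - t^2|^2 := (sq_abs _).symm
      _ ≤ |x - x'|^2 := by gcongr
      _ = (x - x')^2 := sq_abs _
  have hby : (p^4 - q^4)^2 ≤ (y - y')^2 := by
    have h1 : |p^4 - q^4| ≤ |y - y'| := by
      rw [hp4, hq4]; exact abs_abs_sub_abs_le_abs_sub y y'
    calc (p^4 - q^4)^2 = |p^4 - q^4|^2 := (sq_abs _).symm
      _ ≤ |y - y'|^2 := by gcongr
      _ = (y - y')^2 := sq_abs _
  have hD : (s^3 - t^3)^2 ≤ (9/4) * (1 + (x^2 + x'^2)) * (x - x')^2 := by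
    have h1 := L1inner s t hs0 ht0
    rw [hs4, ht4] at h1
    have h2 := h1.trans (mul_le_mul_of_nonneg_left hax (by positivity : (0:ℝ) ≤ (9/4) * (1 + x^2 + x'^2)))
    linarith [h2]
  have hE : (p^5 - q^5)^2 ≤ (25/16) * (1 + (y^2 + y'^2)) * (y - y')^2 := by
    have h1 := L2inner p q hp0 hq0
    rw [hp8, hq8] at h1
    have h2 := h1.trans (mul_le_mul_of_nonneg_left hby (by positivity : (0:ℝ) ≤ (25/16) * (1 + y^2 + y'^2)))
    linarith [h2]
  have hcube : (1/2) * (x - x')^2 * (x^2 + x'^2) ≤ (x - x') * (x^3 - x'^3) := by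
    nlinarith [sq_nonneg ((x - x') * (x + x'))]
  have hgx : |x| ^ ((3:ℝ)/2) = s^3 := rpow32' |x| (abs_nonneg x)
  have hgx' : |x'| ^ ((3:ℝ)/2) = t^3 := rpow32' |x'| (abs_nonneg x')
  have hfy : |y| ^ ((5:ℝ)/4) = p^5 := rpow54' |y| (abs_nonneg y)
  have hfy' : |y'| ^ ((5:ℝ)/4) = q^5 := rpow54' |y'| (abs_nonneg y')
  simp only [fEx, gEx, hEx, hgx, hgx', hfy, hfy', sq_abs]
  have key := finalStep (x - x') (y - y') (s^3 - t^3) (p^5 - q^5) (x^3 - x'^3)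
    (x^2 + x'^2) (y^2 + y'^2) (by positivity) (by positivity) hD hE hcube
  linarith [key]
end
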